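/- Let S ⊆ ℝ² be an open connected set and let u : ℝ² → ℝ³ be smooth on S with ∂₁u(x) and ∂₂u(x) linearly independent at every x ∈ S. Define g_{ij} = ∂ᵢu·∂ⱼu with inverse (g^{ij}), n = (∂₁u × ∂₂u)/|∂₁u × ∂₂u| and Γ^k_{ij} = ½ g^{kl}(∂ⱼg_{il} + ∂ᵢg_{jl} − ∂_l g_{ij}). Let τ : S → ℝ³ be smooth with ∂ᵢu·∂ⱼτ + ∂ⱼu·∂ᵢτ = 0 on S for all i, j. Then n·(∂ᵢ∂ⱼτ − Γ^k_{ij}∂_k τ) = 0 on S for all i, j ∈ {1,2} if and only if there exist constant vectors c₀, c₁ ∈ ℝ³ such that τ(x) = c₀ + c₁ × u(x) for all x ∈ S. -/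

import Mathlib

open Matrix Set

noncomputable section

/-- The `i`-th partial derivative of a map `ℝ² → ℝ³`. -/
def pdv (i : Fin 2) (f : (Fin 2 → ℝ) → (Fin 3 → ℝ)) (x : Fin 2 → ℝ) : Fin 3 → ℝ :=
  fderiv ℝ f x (Pi.single i 1)

/-- The `i`-th partial derivative of a scalar function on `ℝ²`. -/
def pds (i : Fin 2) (f : (Fin 2 → ℝ) → ℝ) (x : Fin 2 → ℝ) : ℝ :=
  fderiv ℝ f x (Pi.single i 1)

/-- Euclidean norm on `ℝ³`. -/
def norm3 (a : Fin 3 → ℝ) : ℝ := Real.sqrt (a ⬝ᵥ a)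

/-- The induced metric `g_{ij} = ∂ᵢu·∂ⱼu` of `u`. -/
def gmat (u : (Fin 2 → ℝ) → (Fin 3 → ℝ)) (x : Fin 2 → ℝ) : Matrix (Fin 2) (Fin 2) ℝ :=
  Matrix.of fun i j => pdv i u x ⬝ᵥ pdv j u x

/-- The inverse metric `(g^{ij})`. -/
def ginv (u : (Fin 2 → ℝ) → (Fin 3 → ℝ)) (x : Fin 2 → ℝ) : Matrix (Fin 2) (Fin 2) ℝ :=
  (gmat u x)⁻¹

/-- The unit normal `n = (∂₁u × ∂₂u)/|∂₁u × ∂₂u|` of `u`. -/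
def nrm (u : (Fin 2 → ℝ) → (Fin 3 → ℝ)) (x : Fin 2 → ℝ) : Fin 3 → ℝ :=
  (norm3 (pdv 0 u x ⨯₃ pdv 1 u x))⁻¹ • (pdv 0 u x ⨯₃ pdv 1 u x)

/-- The second fundamental form `h_{ij} = n·∂ᵢ∂ⱼu` of `u`. -/
def sff (u : (Fin 2 → ℝ) → (Fin 3 → ℝ)) (x : Fin 2 → ℝ) (i j : Fin 2) : ℝ :=
  nrm u x ⬝ᵥ pdv i (pdv j u) x

/-- The Christoffel symbols `Γ^k_{ij} = ½ g^{kl}(∂ⱼg_{il} + ∂ᵢg_{jl} − ∂_l g_{ij})` of `u`. -/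
def Gam (u : (Fin 2 → ℝ) → (Fin 3 → ℝ)) (x : Fin 2 → ℝ) (k i j : Fin 2) : ℝ :=
  (1/2) * ∑ l, ginv u x k l *
    (pds j (fun y => gmat u y i l) x + pds i (fun y => gmat u y j l) x
      - pds l (fun y => gmat u y i j) x)


abbrev E2 := Fin 2 → ℝ
abbrev V3 := Fin 3 → ℝ


lemma cross_c0 (a b : V3) : (a ⨯₃ b) 0 = a 1 * b 2 - a 2 * b 1 := rfl
lemma cross_c1 (a b : V3) : (a ⨯₃ b) 1 = a 2 * b 0 - a 0 * b 2 := rfl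
lemma cross_c2 (a b : V3) : (a ⨯₃ b) 2 = a 0 * b 1 - a 1 * b 0 := rfl

lemma dot3 (a b : V3) : a ⬝ᵥ b = a 0 * b 0 + a 1 * b 1 + a 2 * b 2 := by
  simp [dotProduct, Fin.sum_univ_three]

lemma dot_cross_self_left (v a : V3) : (v ⨯₃ a) ⬝ᵥ a = 0 := by
  simp only [dot3, cross_c0, cross_c1, cross_c2]; ring

lemma triple_cyc (x y z : V3) : x ⬝ᵥ (y ⨯₃ z) = y ⬝ᵥ (z ⨯₃ x) := by
  simp only [dot3, cross_c0, cross_c1, cross_c2]; ring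

lemma cross_cross_self (a b w : V3) :
    (a ⨯₃ b) ⨯₃ ((a ⨯₃ b) ⨯₃ w) = ((a ⨯₃ b) ⬝ᵥ w) • (a ⨯₃ b) - ((a ⨯₃ b) ⬝ᵥ (a ⨯₃ b)) • w := by
  funext i; fin_cases i <;>
    · simp only [Fin.mk_zero, Fin.mk_one, Fin.reduceFinMk, Fin.isValue, Pi.sub_apply, Pi.smul_apply, smul_eq_mul,
        dot3, cross_c0, cross_c1, cross_c2]
      ring

lemma cross_w_of_perp (a b w : V3) :
    (a ⨯₃ b) ⨯₃ w = (w ⬝ᵥ a) • b - (w ⬝ᵥ b) • a := by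
  funext i; fin_cases i <;>
    · simp only [Fin.mk_zero, Fin.mk_one, Fin.reduceFinMk, Fin.isValue, Pi.sub_apply, Pi.smul_apply, smul_eq_mul,
        dot3, cross_c0, cross_c1, cross_c2]
      ring

lemma perp_perp (a b w : V3) (h1 : w ⬝ᵥ a = 0) (h2 : w ⬝ᵥ b = 0) :
    ((a ⨯₃ b) ⬝ᵥ (a ⨯₃ b)) • w = (w ⬝ᵥ (a ⨯₃ b)) • (a ⨯₃ b) := by
  have h := cross_cross_self a b w
  rw [cross_w_of_perp a b w, h1, h2, dotProduct_comm] at h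
  simp only [zero_smul, sub_zero, sub_self, map_zero, zero_sub] at h
  exact (sub_eq_zero.mp h.symm).symm

lemma dot_self_pos {v : V3} (hv : v ≠ 0) : 0 < v ⬝ᵥ v := by
  obtain ⟨i, hi⟩ : ∃ i, v i ≠ 0 := by
    by_contra h; push_neg at h; exact hv (funext h)
  rw [dot3]
  fin_cases i <;> simp only [Fin.mk_zero, Fin.mk_one, Fin.reduceFinMk, Fin.isValue] at hi <;>
    nlinarith [mul_self_pos.mpr hi, mul_self_nonneg (v 0), mul_self_nonneg (v 1),
      mul_self_nonneg (v 2)]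

lemma dot_self_ne {v : V3} (hv : v ≠ 0) : v ⬝ᵥ v ≠ 0 := ne_of_gt (dot_self_pos hv)

lemma cross_ne_zero_of_indep {a b : V3} (h : LinearIndependent ℝ ![a, b]) : a ⨯₃ b ≠ 0 := by
  intro hc
  rw [linearIndependent_fin2] at h
  obtain ⟨hb, hs⟩ := h
  obtain ⟨i, hi⟩ : ∃ i, b i ≠ 0 := by
    by_contra hx; push_neg at hx; exact hb (funext hx)
  have h0 := congrFun hc 0
  have h1 := congrFun hc 1
  have h2 := congrFun hc 2
  simp only [cross_c0, cross_c1, cross_c2, Pi.zero_apply] at h0 h1 h2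
  apply hs (a i / b i)
  funext j
  simp only [Pi.smul_apply, smul_eq_mul]
  fin_cases i <;> simp only [Fin.mk_zero, Fin.mk_one, Fin.reduceFinMk, Fin.isValue] at hi <;>
    fin_cases j <;>
    · simp only [Fin.mk_zero, Fin.mk_one, Fin.reduceFinMk, Fin.isValue, Matrix.cons_val_one,
        Matrix.cons_val_zero, Matrix.head_cons]
      field_simp <;>
      linarith [h0, h1, h2, mul_comm (a 0) (b 1), mul_comm (a 0) (b 2), mul_comm (a 1) (b 2),
        mul_comm (a 1) (b 0), mul_comm (a 2) (b 0), mul_comm (a 2) (b 1)]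

/-- two vectors with equal dot products against `a`, `b`, `a ⨯₃ b` are equal. -/
lemma eq_of_dots {a b : V3} (hN : a ⨯₃ b ≠ 0) {w w' : V3}
    (ha : w ⬝ᵥ a = w' ⬝ᵥ a) (hb : w ⬝ᵥ b = w' ⬝ᵥ b)
    (hn : w ⬝ᵥ (a ⨯₃ b) = w' ⬝ᵥ (a ⨯₃ b)) : w = w' := by
  have h1 : (w - w') ⬝ᵥ a = 0 := by rw [sub_dotProduct, ha, sub_self]
  have h2 : (w - w') ⬝ᵥ b = 0 := by rw [sub_dotProduct, hb, sub_self]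
  have h3 : (w - w') ⬝ᵥ (a ⨯₃ b) = 0 := by rw [sub_dotProduct, hn, sub_self]
  have := perp_perp a b (w - w') h1 h2
  rw [h3, zero_smul] at this
  have hne := dot_self_ne hN
  have := (smul_eq_zero.mp this).resolve_left hne
  exact sub_eq_zero.mp this

/-- a vector orthogonal to `a` and `b` is a multiple of `a ⨯₃ b`. -/
lemma eq_smul_cross {a b : V3} (hN : a ⨯₃ b ≠ 0) {w : V3}
    (h1 : w ⬝ᵥ a = 0) (h2 : w ⬝ᵥ b = 0) :
    w = ((w ⬝ᵥ (a ⨯₃ b)) / ((a ⨯₃ b) ⬝ᵥ (a ⨯₃ b))) • (a ⨯₃ b) := by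
  have h := perp_perp a b w h1 h2
  have hne := dot_self_ne hN
  rw [div_eq_inv_mul, ← smul_smul, ← h, smul_smul, inv_mul_cancel₀ hne, one_smul]

lemma id_cross_cross (a b c : V3) : (a ⨯₃ c) ⨯₃ (b ⨯₃ c) = (a ⬝ᵥ (b ⨯₃ c)) • c := by
  funext i; fin_cases i <;>
    · simp only [Fin.mk_zero, Fin.mk_one, Fin.reduceFinMk, Fin.isValue, Pi.smul_apply,
        smul_eq_mul, dot3, cross_c0, cross_c1, cross_c2]
      ring

lemma id_dot_NN (a b : V3) : a ⬝ᵥ (b ⨯₃ (a ⨯₃ b)) = (a ⨯₃ b) ⬝ᵥ (a ⨯₃ b) := by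
  simp only [dot3, cross_c0, cross_c1, cross_c2]; ring

lemma id_dot_neg_NN (a b : V3) : a ⬝ᵥ ((a ⨯₃ b) ⨯₃ b) = -((a ⨯₃ b) ⬝ᵥ (a ⨯₃ b)) := by
  simp only [dot3, cross_c0, cross_c1, cross_c2]; ring

lemma id_dot_pos_NN (a b : V3) : b ⬝ᵥ ((a ⨯₃ b) ⨯₃ a) = (a ⨯₃ b) ⬝ᵥ (a ⨯₃ b) := by
  simp only [dot3, cross_c0, cross_c1, cross_c2]; ring

lemma cross_smul_left (c : ℝ) (a b : V3) : (c • a) ⨯₃ b = c • (a ⨯₃ b) := by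
  rw [LinearMap.map_smul]; rfl

lemma cross_smul_right (c : ℝ) (a b : V3) : a ⨯₃ (c • b) = c • (a ⨯₃ b) := _root_.map_smul _ _ _

lemma gamma_zero {a b : V3} (hN : a ⨯₃ b ≠ 0) {d₀ d₁ : ℝ}
    (h : (d₀ • (a ⨯₃ b)) ⨯₃ b = (d₁ • (a ⨯₃ b)) ⨯₃ a) : d₀ = 0 ∧ d₁ = 0 := by
  have hm := dot_self_ne hN
  have ha := congrArg (fun w => a ⬝ᵥ w) h
  have hb := congrArg (fun w => b ⬝ᵥ w) h
  simp only [cross_smul_left, dotProduct_smul, smul_eq_mul] at ha hb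
  rw [id_dot_neg_NN] at ha
  rw [id_dot_pos_NN] at hb
  have ha2 : a ⬝ᵥ ((a ⨯₃ b) ⨯₃ a) = 0 := by
    rw [dotProduct_comm]; exact dot_cross_self_left _ _
  have hb2 : b ⬝ᵥ ((a ⨯₃ b) ⨯₃ b) = 0 := by
    rw [dotProduct_comm]; exact dot_cross_self_left _ _
  rw [ha2] at ha
  rw [hb2] at hb
  constructor
  · have : d₀ * ((a ⨯₃ b) ⬝ᵥ (a ⨯₃ b)) = 0 := by linarith [ha]
    exact (mul_eq_zero.mp this).resolve_right hm
  · have : d₁ * ((a ⨯₃ b) ⬝ᵥ (a ⨯₃ b)) = 0 := by linarith [hb]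
    exact (mul_eq_zero.mp this).resolve_right hm


section calc0
variable {f g : E2 → V3} {f' g' : E2 →L[ℝ] V3} {x : E2} {i j : Fin 2}

lemma contDiffAt_pdv (hf : ContDiffAt ℝ (⊤ : ℕ∞) f x) (i : Fin 2) :
    ContDiffAt ℝ (⊤ : ℕ∞) (pdv i f) x := by
  have h1 : ContDiffAt ℝ (⊤ : ℕ∞) (fderiv ℝ f) x := hf.fderiv_right (by simp)
  exact (ContinuousLinearMap.apply ℝ V3 (Pi.single i 1)).contDiff.contDiffAt.comp x h1

lemma diffAt_pdv (hf : ContDiffAt ℝ (⊤ : ℕ∞) f x) (i : Fin 2) :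
    DifferentiableAt ℝ (pdv i f) x :=
  (contDiffAt_pdv hf i).differentiableAt (by simp)

lemma pdv_congr (h : f =ᶠ[nhds x] g) : pdv i f x = pdv i g x := by
  rw [pdv, pdv, h.fderiv_eq]

lemma hasFDerivAt_component (hf : HasFDerivAt f f' x) (m : Fin 3) :
    HasFDerivAt (fun y => f y m) ((ContinuousLinearMap.proj m).comp f') x := by
  exact ((ContinuousLinearMap.proj m).hasFDerivAt.comp x hf : _)

/-- product rule for the dot product -/
lemma pds_dot (hf : DifferentiableAt ℝ f x) (hg : DifferentiableAt ℝ g x) (j : Fin 2) :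
    pds j (fun y => f y ⬝ᵥ g y) x = pdv j f x ⬝ᵥ g x + f x ⬝ᵥ pdv j g x := by
  have Hf := hf.hasFDerivAt
  have Hg := hg.hasFDerivAt
  have H : HasFDerivAt (fun y => f y ⬝ᵥ g y)
      (∑ m : Fin 3, ((fun y => f y m) x • ((ContinuousLinearMap.proj m).comp (fderiv ℝ g x))
        + (fun y => g y m) x • ((ContinuousLinearMap.proj m).comp (fderiv ℝ f x)))) x := by
    have : (fun y => f y ⬝ᵥ g y) = fun y => ∑ m : Fin 3, f y m * g y m := by
      funext y; simp [dotProduct]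
    rw [this]
    exact HasFDerivAt.fun_sum fun m _ =>
      (hasFDerivAt_component Hf m).fun_mul (hasFDerivAt_component Hg m)
  rw [pds, H.fderiv]
  simp only [ContinuousLinearMap.coe_sum', Finset.sum_apply, ContinuousLinearMap.add_apply,
    ContinuousLinearMap.smul_apply, ContinuousLinearMap.coe_comp', Function.comp_apply,
    ContinuousLinearMap.proj_apply, smul_eq_mul, dotProduct, pdv]
  rw [← Finset.sum_add_distrib]
  congr 1; funext m; ring

lemma diffAt_dot (hf : DifferentiableAt ℝ f x) (hg : DifferentiableAt ℝ g x) :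
    DifferentiableAt ℝ (fun y => f y ⬝ᵥ g y) x := by
  have : (fun y => f y ⬝ᵥ g y) = fun y => ∑ m : Fin 3, f y m * g y m := by
    funext y; simp [dotProduct]
  rw [this]
  exact DifferentiableAt.fun_sum fun m _ =>
    ((hasFDerivAt_component hf.hasFDerivAt m).differentiableAt).mul
      ((hasFDerivAt_component hg.hasFDerivAt m).differentiableAt)

lemma pdv_component (hf : DifferentiableAt ℝ f x) (j : Fin 2) (m : Fin 3) :
    pdv j f x m = pds j (fun y => f y m) x := by
  rw [pds, (hasFDerivAt_component hf.hasFDerivAt m).fderiv]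
  rfl

lemma diffAt_component (hf : DifferentiableAt ℝ f x) (m : Fin 3) :
    DifferentiableAt ℝ (fun y => f y m) x :=
  (hasFDerivAt_component hf.hasFDerivAt m).differentiableAt

lemma diffAt_cross (hf : DifferentiableAt ℝ f x) (hg : DifferentiableAt ℝ g x) :
    DifferentiableAt ℝ (fun y => f y ⨯₃ g y) x := by
  apply differentiableAt_pi.mpr
  intro m
  fin_cases m <;>
  · show DifferentiableAt ℝ (fun y => f y _ * g y _ - f y _ * g y _) x
    exact ((diffAt_component hf _).mul (diffAt_component hg _)).sub
      ((diffAt_component hf _).mul (diffAt_component hg _))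

lemma pds_mul {p q : E2 → ℝ} (hp : DifferentiableAt ℝ p x) (hq : DifferentiableAt ℝ q x)
    (j : Fin 2) :
    pds j (fun y => p y * q y) x = pds j p x * q x + p x * pds j q x := by
  rw [pds, (hp.hasFDerivAt.fun_mul hq.hasFDerivAt).fderiv]
  simp only [ContinuousLinearMap.add_apply, ContinuousLinearMap.smul_apply, smul_eq_mul, pds]
  ring

lemma pds_sub {p q : E2 → ℝ} (hp : DifferentiableAt ℝ p x) (hq : DifferentiableAt ℝ q x)
    (j : Fin 2) : pds j (fun y => p y - q y) x = pds j p x - pds j q x := by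
  rw [pds, fderiv_fun_sub hp hq]; rfl

/-- product rule for the cross product -/
lemma pdv_cross (hf : DifferentiableAt ℝ f x) (hg : DifferentiableAt ℝ g x) (j : Fin 2) :
    pdv j (fun y => f y ⨯₃ g y) x = pdv j f x ⨯₃ g x + f x ⨯₃ pdv j g x := by
  funext m
  rw [pdv_component (diffAt_cross hf hg) j m]
  fin_cases m <;>
  · show pds j (fun y => f y _ * g y _ - f y _ * g y _) x = _
    rw [pds_sub ((diffAt_component hf _).fun_mul (diffAt_component hg _))
        ((diffAt_component hf _).fun_mul (diffAt_component hg _)),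
      pds_mul (diffAt_component hf _) (diffAt_component hg _),
      pds_mul (diffAt_component hf _) (diffAt_component hg _)]
    simp only [Pi.add_apply]
    show _ = ((_ : ℝ) * _ - _ * _) + ((_ : ℝ) * _ - _ * _)
    rw [← pdv_component hf, ← pdv_component hf, ← pdv_component hg, ← pdv_component hg]
    ring
end calc0

section calc1
variable {f g : E2 → V3} {x : E2} {i j : Fin 2}

/-- Clairaut / Schwarz symmetry of second partials. -/
lemma pdv_comm (hf : ContDiffAt ℝ (⊤ : ℕ∞) f x) (i j : Fin 2) :
    pdv i (pdv j f) x = pdv j (pdv i f) x := by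
  have hsymm : IsSymmSndFDerivAt ℝ f x := hf.isSymmSndFDerivAt (by simp; exact (WithTop.coe_le_coe.mpr (le_top : (2:ℕ∞) ≤ ⊤) : ((2:ℕ∞) : WithTop ℕ∞) ≤ _))
  have hd : DifferentiableAt ℝ (fderiv ℝ f) x :=
    (hf.fderiv_right (m := (⊤ : ℕ∞)) (by simp)).differentiableAt (by simp)
  have key : ∀ a b : Fin 2, pdv a (pdv b f) x
      = fderiv ℝ (fderiv ℝ f) x (Pi.single a 1) (Pi.single b 1) := by
    intro a b
    have : pdv b f = fun y => (ContinuousLinearMap.apply ℝ V3 (Pi.single b 1)) (fderiv ℝ f y) :=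
      rfl
    have H : HasFDerivAt (fun y => (ContinuousLinearMap.apply ℝ V3 (Pi.single b 1)) (fderiv ℝ f y))
        ((ContinuousLinearMap.apply ℝ V3 (Pi.single b 1)).comp (fderiv ℝ (fderiv ℝ f) x)) x := by
      exact ((ContinuousLinearMap.apply ℝ V3 (Pi.single b 1)).hasFDerivAt.comp x hd.hasFDerivAt : _)
    rw [pdv, this, H.fderiv]
    rfl
  rw [key i j, key j i]
  exact hsymm _ _

/-- derivative of `y ↦ c₀ + c₁ ⨯₃ h y`. -/
lemma pdv_const_add_cross {h : E2 → V3} (hh : DifferentiableAt ℝ h x) (c₀ c₁ : V3) (i : Fin 2) :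
    pdv i (fun y => c₀ + c₁ ⨯₃ h y) x = c₁ ⨯₃ pdv i h x := by
  set L : V3 →L[ℝ] V3 := LinearMap.toContinuousLinearMap (crossProduct c₁)
  have H : HasFDerivAt (fun y => c₀ + c₁ ⨯₃ h y) (L.comp (fderiv ℝ h x)) x := by
    have := (L.hasFDerivAt.comp x hh.hasFDerivAt).const_add c₀
    exact this
  rw [pdv, H.fderiv]
  rfl

lemma e2_decomp (v : E2) : v = v 0 • (Pi.single 0 1 : E2) + v 1 • (Pi.single 1 1 : E2) := by
  funext m; fin_cases m <;> simp

lemma clm_zero_of_pdv {T : E2 →L[ℝ] V3} (h0 : T (Pi.single 0 1) = 0)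
    (h1 : T (Pi.single 1 1) = 0) : T = 0 := by
  apply ContinuousLinearMap.ext
  intro v
  rw [e2_decomp v, map_add, _root_.map_smul, _root_.map_smul, h0, h1]
  simp

/-- A locally constant criterion: zero derivative on an open preconnected set. -/
lemma const_of_fderiv_zero {S : Set E2} (hS : IsOpen S) (hc : IsPreconnected S)
    {f : E2 → V3} (hd : ∀ y ∈ S, DifferentiableAt ℝ f y)
    (hz : ∀ y ∈ S, fderiv ℝ f y = 0) {p q : E2} (hp : p ∈ S) (hq : q ∈ S) : f p = f q := by
  have hloc : ∀ z ∈ S, ∀ᶠ w in nhds z, f w = f z := by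
    intro z hz'
    obtain ⟨ε, hε, hball⟩ := Metric.isOpen_iff.mp hS z hz'
    have hcon : ∀ w ∈ Metric.ball z ε, f w = f z := by
      intro w hw
      apply (convex_ball z ε).is_const_of_fderivWithin_eq_zero
        (fun y hy => (hd y (hball hy)).differentiableWithinAt) _ hw (Metric.mem_ball_self hε)
      intro y hy
      rw [fderivWithin_of_isOpen Metric.isOpen_ball hy]
      exact hz y (hball hy)
    filter_upwards [Metric.ball_mem_nhds z hε] using hcon
  classical
  set T : Set E2 := {y | y ∈ S ∧ f y = f p} with hT
  set U : Set E2 := {y | y ∈ S ∧ f y ≠ f p} with hU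
  have hTopen : IsOpen T := by
    rw [Metric.isOpen_iff]
    intro z hzT
    obtain ⟨ε, hε, hball⟩ := Metric.isOpen_iff.mp hS z hzT.1
    obtain ⟨ε', hε', hball'⟩ := Metric.eventually_nhds_iff_ball.mp (hloc z hzT.1)
    exact ⟨min ε ε', lt_min hε hε', fun w hw => ⟨hball (Metric.ball_subset_ball (min_le_left _ _) hw),
      (hball' w (Metric.ball_subset_ball (min_le_right _ _) hw)).trans hzT.2⟩⟩
  have hUopen : IsOpen U := by
    rw [Metric.isOpen_iff]
    intro z hzU
    obtain ⟨ε, hε, hball⟩ := Metric.isOpen_iff.mp hS z hzU.1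
    obtain ⟨ε', hε', hball'⟩ := Metric.eventually_nhds_iff_ball.mp (hloc z hzU.1)
    refine ⟨min ε ε', lt_min hε hε', fun w hw => ⟨hball (Metric.ball_subset_ball (min_le_left _ _) hw), ?_⟩⟩
    rw [hball' w (Metric.ball_subset_ball (min_le_right _ _) hw)]
    exact hzU.2
  have hsub : S ⊆ T ∪ U := by
    intro y hy
    by_cases hfy : f y = f p
    · exact Or.inl ⟨hy, hfy⟩
    · exact Or.inr ⟨hy, hfy⟩
  have hdisj : Disjoint T U := by
    rw [Set.disjoint_left]
    rintro y ⟨_, h1⟩ ⟨_, h2⟩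
    exact h2 h1
  have hne : (S ∩ T).Nonempty := ⟨p, hp, hp, rfl⟩
  have := hc.subset_left_of_subset_union hTopen hUopen hdisj hsub hne
  exact ((this hq).2).symm
end calc1


section geom2

lemma cross_self_v (v : V3) : v ⨯₃ v = 0 := by
  funext i; fin_cases i <;>
    · simp only [Fin.mk_zero, Fin.mk_one, Fin.reduceFinMk, Fin.isValue, Pi.zero_apply,
        cross_c0, cross_c1, cross_c2]
      ring

lemma lagrange (a b : V3) :
    a ⬝ᵥ a * (b ⬝ᵥ b) - a ⬝ᵥ b * (b ⬝ᵥ a) = (a ⨯₃ b) ⬝ᵥ (a ⨯₃ b) := by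
  simp only [dot3, cross_c0, cross_c1, cross_c2]; ring

/-- The six dot products of `W ⨯₃ a` and `W ⨯₃ b`, where `W` is the unnormalised
rotation field. -/
lemma wid2 (a b t₀ t₁ : V3) :
    ((((t₁ ⬝ᵥ (a ⨯₃ b)) • a - (t₀ ⬝ᵥ (a ⨯₃ b)) • b + (t₀ ⬝ᵥ b) • (a ⨯₃ b)) ⨯₃ a) ⬝ᵥ b)
      = (t₀ ⬝ᵥ b) * ((a ⨯₃ b) ⬝ᵥ (a ⨯₃ b)) := by
  simp only [dot3, cross_c0, cross_c1, cross_c2, Pi.add_apply, Pi.sub_apply, Pi.smul_apply,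
    smul_eq_mul]
  ring

lemma wid3 (a b t₀ t₁ : V3) :
    ((((t₁ ⬝ᵥ (a ⨯₃ b)) • a - (t₀ ⬝ᵥ (a ⨯₃ b)) • b + (t₀ ⬝ᵥ b) • (a ⨯₃ b)) ⨯₃ a) ⬝ᵥ (a ⨯₃ b))
      = (t₀ ⬝ᵥ (a ⨯₃ b)) * ((a ⨯₃ b) ⬝ᵥ (a ⨯₃ b)) := by
  simp only [dot3, cross_c0, cross_c1, cross_c2, Pi.add_apply, Pi.sub_apply, Pi.smul_apply,
    smul_eq_mul]
  ring

lemma wid4 (a b t₀ t₁ : V3) :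
    ((((t₁ ⬝ᵥ (a ⨯₃ b)) • a - (t₀ ⬝ᵥ (a ⨯₃ b)) • b + (t₀ ⬝ᵥ b) • (a ⨯₃ b)) ⨯₃ b) ⬝ᵥ a)
      = -((t₀ ⬝ᵥ b) * ((a ⨯₃ b) ⬝ᵥ (a ⨯₃ b))) := by
  simp only [dot3, cross_c0, cross_c1, cross_c2, Pi.add_apply, Pi.sub_apply, Pi.smul_apply,
    smul_eq_mul]
  ring

lemma wid6 (a b t₀ t₁ : V3) :
    ((((t₁ ⬝ᵥ (a ⨯₃ b)) • a - (t₀ ⬝ᵥ (a ⨯₃ b)) • b + (t₀ ⬝ᵥ b) • (a ⨯₃ b)) ⨯₃ b) ⬝ᵥ (a ⨯₃ b))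
      = (t₁ ⬝ᵥ (a ⨯₃ b)) * ((a ⨯₃ b) ⬝ᵥ (a ⨯₃ b)) := by
  simp only [dot3, cross_c0, cross_c1, cross_c2, Pi.add_apply, Pi.sub_apply, Pi.smul_apply,
    smul_eq_mul]
  ring

end geom2

section geom3
variable {S : Set E2} {u τ : E2 → V3} {x : E2}

lemma nrm_dot (u : E2 → V3) (x : E2) (X : V3) :
    nrm u x ⬝ᵥ X
      = (norm3 (pdv 0 u x ⨯₃ pdv 1 u x))⁻¹ * ((pdv 0 u x ⨯₃ pdv 1 u x) ⬝ᵥ X) := by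
  rw [nrm, smul_dotProduct]
  rfl

lemma norm3_ne {v : V3} (hv : v ≠ 0) : norm3 v ≠ 0 := by
  rw [norm3]
  exact ne_of_gt (Real.sqrt_pos.mpr (dot_self_pos hv))

lemma det_gmat (u : E2 → V3) (x : E2) :
    (gmat u x).det = (pdv 0 u x ⨯₃ pdv 1 u x) ⬝ᵥ (pdv 0 u x ⨯₃ pdv 1 u x) := by
  rw [Matrix.det_fin_two]
  exact lagrange _ _

lemma nrm_dot_cross {G : V3} (hN : pdv 0 u x ⨯₃ pdv 1 u x ≠ 0)
    (hG0 : G ⬝ᵥ pdv 0 u x = 0) (hG1 : G ⬝ᵥ pdv 1 u x = 0) (w : V3) :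
    nrm u x ⬝ᵥ (w ⨯₃ G) = 0 := by
  set N := pdv 0 u x ⨯₃ pdv 1 u x with hNdef
  have hγ := eq_smul_cross hN hG0 hG1
  rw [nrm_dot, ← hNdef, hγ, cross_smul_right, dotProduct_smul]
  have : N ⬝ᵥ (w ⨯₃ N) = 0 := by
    rw [triple_cyc, cross_self_v, dotProduct_zero]
  rw [this]
  simp

lemma pds_gmat (hux : ContDiffAt ℝ (⊤ : ℕ∞) u x) (i l j : Fin 2) :
    pds j (fun y => gmat u y i l) x
      = pdv j (pdv i u) x ⬝ᵥ pdv l u x + pdv i u x ⬝ᵥ pdv j (pdv l u) x :=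
  pds_dot (diffAt_pdv hux i) (diffAt_pdv hux l) j

lemma Gam_eq (hux : ContDiffAt ℝ (⊤ : ℕ∞) u x) (k i j : Fin 2) :
    Gam u x k i j = ∑ l, ginv u x k l * (pdv i (pdv j u) x ⬝ᵥ pdv l u x) := by
  have hb : ∀ l : Fin 2,
      pds j (fun y => gmat u y i l) x + pds i (fun y => gmat u y j l) x
        - pds l (fun y => gmat u y i j) x
      = 2 * (pdv i (pdv j u) x ⬝ᵥ pdv l u x) := by
    intro l
    rw [pds_gmat hux i l j, pds_gmat hux j l i, pds_gmat hux i j l,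
      pdv_comm hux j i, pdv_comm hux l i, pdv_comm hux l j]
    have hc := dotProduct_comm (pdv j u x) (pdv i (pdv l u) x)
    linarith
  rw [Gam]
  rw [Finset.sum_congr rfl fun l _ => by rw [hb l]]
  rw [Finset.mul_sum]
  exact Finset.sum_congr rfl fun l _ => by ring

lemma gmat_symm_dot (u : E2 → V3) (x : E2) (k l : Fin 2) :
    gmat u x k l = pdv k u x ⬝ᵥ pdv l u x := rfl

lemma gauss (hux : ContDiffAt ℝ (⊤ : ℕ∞) u x)
    (hN : pdv 0 u x ⨯₃ pdv 1 u x ≠ 0) (i j l : Fin 2) :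
    (pdv i (pdv j u) x - ∑ k, Gam u x k i j • pdv k u x) ⬝ᵥ pdv l u x = 0 := by
  have hdet : IsUnit (gmat u x).det := by
    rw [det_gmat]
    exact (dot_self_ne hN).isUnit
  have hInv : ginv u x * gmat u x = 1 := Matrix.nonsing_inv_mul _ hdet
  have hI : ∀ a b : Fin 2,
      ginv u x a 0 * (pdv 0 u x ⬝ᵥ pdv b u x) + ginv u x a 1 * (pdv 1 u x ⬝ᵥ pdv b u x)
        = if a = b then 1 else 0 := by
    intro a b
    have h := congrFun (congrFun hInv a) b
    rw [Matrix.mul_apply, Fin.sum_univ_two] at h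
    rw [gmat_symm_dot, gmat_symm_dot] at h
    rw [h]
    rw [Matrix.one_apply]
  have hsymm : ginv u x 0 1 = ginv u x 1 0 := by
    have hg : (gmat u x)ᵀ = gmat u x := by
      funext a b
      rw [Matrix.transpose_apply, gmat_symm_dot, gmat_symm_dot, dotProduct_comm]
    have := Matrix.transpose_nonsing_inv (gmat u x)
    rw [hg] at this
    have h2 := congrFun (congrFun this 0) 1
    rw [Matrix.transpose_apply] at h2
    exact h2.symm
  have hI00 := hI 0 0; have hI01 := hI 0 1; have hI10 := hI 1 0; have hI11 := hI 1 1
  simp only [if_pos rfl, if_true, if_neg (by decide : ¬ ((0:Fin 2) = 1)),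
    if_neg (by decide : ¬ ((1:Fin 2) = 0))] at hI00 hI01 hI10 hI11
  rw [Fin.sum_univ_two, sub_dotProduct, add_dotProduct, smul_dotProduct,
    smul_dotProduct, Gam_eq hux, Gam_eq hux, Fin.sum_univ_two, Fin.sum_univ_two]
  fin_cases l <;> simp only [Fin.mk_zero, Fin.mk_one, Fin.isValue, smul_eq_mul]
  · linear_combination (-(pdv i (pdv j u) x ⬝ᵥ pdv 0 u x)) * hI00
      + (-(pdv i (pdv j u) x ⬝ᵥ pdv 1 u x)) * hI10
      + ((pdv i (pdv j u) x ⬝ᵥ pdv 0 u x) * (pdv 1 u x ⬝ᵥ pdv 0 u x)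
        - (pdv i (pdv j u) x ⬝ᵥ pdv 1 u x) * (pdv 0 u x ⬝ᵥ pdv 0 u x)) * hsymm
  · linear_combination (-(pdv i (pdv j u) x ⬝ᵥ pdv 0 u x)) * hI01
      + (-(pdv i (pdv j u) x ⬝ᵥ pdv 1 u x)) * hI11
      + ((pdv i (pdv j u) x ⬝ᵥ pdv 0 u x) * (pdv 1 u x ⬝ᵥ pdv 1 u x)
        - (pdv i (pdv j u) x ⬝ᵥ pdv 1 u x) * (pdv 0 u x ⬝ᵥ pdv 1 u x)) * hsymm
end geom3


section main
variable {x : E2}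

lemma pdv_cross_const {h : E2 → V3} (hh : DifferentiableAt ℝ h x) (c₁ : V3) (i : Fin 2) :
    pdv i (fun y => c₁ ⨯₃ h y) x = c₁ ⨯₃ pdv i h x := by
  set L : V3 →L[ℝ] V3 := LinearMap.toContinuousLinearMap (crossProduct c₁)
  have H : HasFDerivAt (fun y => c₁ ⨯₃ h y) (L.comp (fderiv ℝ h x)) x := by
    exact (L.hasFDerivAt.comp x hh.hasFDerivAt : _)
  rw [pdv, H.fderiv]
  rfl

/-- The rotation field works: `ω ⨯₃ ∂ᵢu = ∂ᵢτ`. -/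
lemma omega_cross_eq {a b t₀ t₁ : V3} (hN : a ⨯₃ b ≠ 0)
    (h00 : a ⬝ᵥ t₀ + a ⬝ᵥ t₀ = 0) (h11 : b ⬝ᵥ t₁ + b ⬝ᵥ t₁ = 0)
    (h01 : a ⬝ᵥ t₁ + b ⬝ᵥ t₀ = 0) :
    ((((a ⨯₃ b) ⬝ᵥ (a ⨯₃ b))⁻¹ •
        ((t₁ ⬝ᵥ (a ⨯₃ b)) • a - (t₀ ⬝ᵥ (a ⨯₃ b)) • b + (t₀ ⬝ᵥ b) • (a ⨯₃ b))) ⨯₃ a = t₀)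
    ∧ ((((a ⨯₃ b) ⬝ᵥ (a ⨯₃ b))⁻¹ •
        ((t₁ ⬝ᵥ (a ⨯₃ b)) • a - (t₀ ⬝ᵥ (a ⨯₃ b)) • b + (t₀ ⬝ᵥ b) • (a ⨯₃ b))) ⨯₃ b = t₁) := by
  have hm := dot_self_ne hN
  have ha0 : a ⬝ᵥ t₀ = 0 := by linarith
  have hb1 : b ⬝ᵥ t₁ = 0 := by linarith
  constructor
  · apply eq_of_dots hN
    · rw [cross_smul_left, smul_dotProduct, dot_cross_self_left, smul_zero,
        dotProduct_comm t₀ a, ha0]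
    · rw [cross_smul_left, smul_dotProduct, wid2, smul_eq_mul, inv_mul_eq_div, mul_div_assoc,
        div_self hm, mul_one]
    · rw [cross_smul_left, smul_dotProduct, wid3, smul_eq_mul, inv_mul_eq_div, mul_div_assoc,
        div_self hm, mul_one]
  · apply eq_of_dots hN
    · rw [cross_smul_left, smul_dotProduct, wid4, dotProduct_comm t₁ a]
      have h2 : a ⬝ᵥ t₁ = -(t₀ ⬝ᵥ b) := by
        rw [dotProduct_comm t₀ b]; linarith
      rw [h2, smul_eq_mul, mul_neg, inv_mul_eq_div, mul_div_assoc, div_self hm, mul_one]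
    · rw [cross_smul_left, smul_dotProduct, dot_cross_self_left, smul_zero,
        dotProduct_comm t₁ b, hb1]
    · rw [cross_smul_left, smul_dotProduct, wid6, smul_eq_mul, inv_mul_eq_div, mul_div_assoc,
        div_self hm, mul_one]
end main

/-- Let `u` be a smooth immersion on an open connected `S ⊆ ℝ²` and `τ` a
smooth infinitesimal bending of `u`. Then the linearised second fundamental form
`n·(∂ᵢ∂ⱼτ − Γ^k_{ij}∂_kτ)` vanishes on `S` iff `τ = c₀ + c₁ × u` for constants `c₀, c₁ ∈ ℝ³`. -/
theorem trivial_bending_iff_linearised_sff_zero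
    (S : Set (Fin 2 → ℝ)) (hS : IsOpen S) (hScon : IsConnected S)
    (u : (Fin 2 → ℝ) → (Fin 3 → ℝ)) (hu : ContDiffOn ℝ (⊤ : ℕ∞) u S)
    (himm : ∀ x ∈ S, LinearIndependent ℝ ![pdv 0 u x, pdv 1 u x])
    (τ : (Fin 2 → ℝ) → (Fin 3 → ℝ)) (hτ : ContDiffOn ℝ (⊤ : ℕ∞) τ S)
    (hbend : ∀ x ∈ S, ∀ i j : Fin 2,
      pdv i u x ⬝ᵥ pdv j τ x + pdv j u x ⬝ᵥ pdv i τ x = 0) :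
    (∀ x ∈ S, ∀ i j : Fin 2,
        nrm u x ⬝ᵥ (pdv i (pdv j τ) x - ∑ k, Gam u x k i j • pdv k τ x) = 0)
      ↔
    (∃ c₀ c₁ : Fin 3 → ℝ, ∀ x ∈ S, τ x = c₀ + c₁ ⨯₃ u x) := by
  have hNne : ∀ y ∈ S, pdv 0 u y ⨯₃ pdv 1 u y ≠ 0 := fun y hy =>
    cross_ne_zero_of_indep (himm y hy)
  have hux : ∀ y ∈ S, ContDiffAt ℝ (⊤ : ℕ∞) u y := fun y hy => hu.contDiffAt (hS.mem_nhds hy)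
  have hτx : ∀ y ∈ S, ContDiffAt ℝ (⊤ : ℕ∞) τ y := fun y hy => hτ.contDiffAt (hS.mem_nhds hy)
  have hGperp : ∀ y ∈ S, ∀ i j l : Fin 2,
      (pdv i (pdv j u) y - ∑ k, Gam u y k i j • pdv k u y) ⬝ᵥ pdv l u y = 0 :=
    fun y hy i j l => gauss (hux y hy) (hNne y hy) i j l
  constructor
  · -- trivial bending from vanishing linearised sff
    intro hb
    classical
    set ω : (Fin 2 → ℝ) → (Fin 3 → ℝ) := fun y =>
      (((pdv 0 u y ⨯₃ pdv 1 u y) ⬝ᵥ (pdv 0 u y ⨯₃ pdv 1 u y))⁻¹ •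
        ((pdv 1 τ y ⬝ᵥ (pdv 0 u y ⨯₃ pdv 1 u y)) • pdv 0 u y
          - (pdv 0 τ y ⬝ᵥ (pdv 0 u y ⨯₃ pdv 1 u y)) • pdv 1 u y
          + (pdv 0 τ y ⬝ᵥ pdv 1 u y) • (pdv 0 u y ⨯₃ pdv 1 u y))) with hωdef
    have hωdiff : ∀ y ∈ S, DifferentiableAt ℝ ω y := by
      intro y hy
      have hNd : DifferentiableAt ℝ (fun z => pdv 0 u z ⨯₃ pdv 1 u z) y :=
        diffAt_cross (diffAt_pdv (hux y hy) 0) (diffAt_pdv (hux y hy) 1)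
      have hm : ((pdv 0 u y ⨯₃ pdv 1 u y) ⬝ᵥ (pdv 0 u y ⨯₃ pdv 1 u y)) ≠ 0 :=
        dot_self_ne (hNne y hy)
      exact ((diffAt_dot hNd hNd).inv hm).smul
        ((((diffAt_dot (diffAt_pdv (hτx y hy) 1) hNd).smul (diffAt_pdv (hux y hy) 0)).sub
          ((diffAt_dot (diffAt_pdv (hτx y hy) 0) hNd).smul (diffAt_pdv (hux y hy) 1))).add
          ((diffAt_dot (diffAt_pdv (hτx y hy) 0) (diffAt_pdv (hux y hy) 1)).smul hNd))
    have hωcross : ∀ y ∈ S, ∀ i : Fin 2, ω y ⨯₃ pdv i u y = pdv i τ y := by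
      intro y hy i
      have h := omega_cross_eq (hNne y hy) (hbend y hy 0 0) (hbend y hy 1 1) (hbend y hy 0 1)
      fin_cases i
      · exact h.1
      · exact h.2
    have hω2 : ∀ y ∈ S, ∀ i j : Fin 2,
        pdv i (pdv j τ) y = pdv i ω y ⨯₃ pdv j u y + ω y ⨯₃ pdv i (pdv j u) y := by
      intro y hy i j
      have heq : pdv j τ =ᶠ[nhds y] fun z => ω z ⨯₃ pdv j u z := by
        filter_upwards [hS.mem_nhds hy] with z hz
        exact (hωcross z hz j).symm
      rw [pdv_congr heq, pdv_cross (hωdiff y hy) (diffAt_pdv (hux y hy) j)]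
    have hbN : ∀ y ∈ S, ∀ i j : Fin 2,
        (pdv 0 u y ⨯₃ pdv 1 u y) ⬝ᵥ (pdv i ω y ⨯₃ pdv j u y) = 0 := by
      intro y hy i j
      have h0 := hb y hy i j
      rw [hω2 y hy i j] at h0
      have hsum : (∑ k, Gam u y k i j • pdv k τ y)
          = ω y ⨯₃ (∑ k, Gam u y k i j • pdv k u y) := by
        have e1 : ∀ k : Fin 2, Gam u y k i j • pdv k τ y
            = ω y ⨯₃ (Gam u y k i j • pdv k u y) := by
          intro k
          rw [← hωcross y hy k, cross_smul_right]
        calc (∑ k, Gam u y k i j • pdv k τ y)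
            = ∑ k, ω y ⨯₃ (Gam u y k i j • pdv k u y) :=
              Finset.sum_congr rfl fun k _ => e1 k
          _ = ω y ⨯₃ (∑ k, Gam u y k i j • pdv k u y) :=
              (map_sum (crossProduct (ω y)) _ Finset.univ).symm
      rw [hsum] at h0
      have hsplit : pdv i ω y ⨯₃ pdv j u y + ω y ⨯₃ pdv i (pdv j u) y
            - ω y ⨯₃ (∑ k, Gam u y k i j • pdv k u y)
          = pdv i ω y ⨯₃ pdv j u y
            + ω y ⨯₃ (pdv i (pdv j u) y - ∑ k, Gam u y k i j • pdv k u y) := by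
        rw [map_sub]
        abel
      rw [hsplit, dotProduct_add] at h0
      have hzero2 : nrm u y ⬝ᵥ
          (ω y ⨯₃ (pdv i (pdv j u) y - ∑ k, Gam u y k i j • pdv k u y)) = 0 :=
        nrm_dot_cross (hNne y hy) (hGperp y hy i j 0) (hGperp y hy i j 1) (ω y)
      rw [hzero2, add_zero, nrm_dot] at h0
      rcases mul_eq_zero.mp h0 with h | h
      · exact absurd h (inv_ne_zero (norm3_ne (hNne y hy)))
      · exact h
    have hdω : ∀ y ∈ S, ∀ i : Fin 2,
        ∃ d : ℝ, pdv i ω y = d • (pdv 0 u y ⨯₃ pdv 1 u y) := by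
      intro y hy i
      have h0 := hbN y hy i 0
      rw [triple_cyc] at h0
      have h1 := hbN y hy i 1
      rw [triple_cyc] at h1
      have hccne : (pdv 0 u y ⨯₃ (pdv 0 u y ⨯₃ pdv 1 u y))
          ⨯₃ (pdv 1 u y ⨯₃ (pdv 0 u y ⨯₃ pdv 1 u y)) ≠ 0 := by
        rw [id_cross_cross, id_dot_NN]
        exact smul_ne_zero (dot_self_ne (hNne y hy)) (hNne y hy)
      have heq := eq_smul_cross hccne h0 h1
      rw [id_cross_cross, id_dot_NN, smul_smul] at heq
      exact ⟨_, heq⟩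
    have hωzero : ∀ y ∈ S, ∀ i : Fin 2, pdv i ω y = 0 := by
      intro y hy i
      obtain ⟨d₀, hd₀⟩ := hdω y hy 0
      obtain ⟨d₁, hd₁⟩ := hdω y hy 1
      have hsym : pdv 0 (pdv 1 τ) y = pdv 1 (pdv 0 τ) y := pdv_comm (hτx y hy) 0 1
      rw [hω2 y hy 0 1, hω2 y hy 1 0, pdv_comm (hux y hy) 0 1] at hsym
      have hc : pdv 0 ω y ⨯₃ pdv 1 u y = pdv 1 ω y ⨯₃ pdv 0 u y := add_right_cancel hsym
      rw [hd₀, hd₁] at hc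
      obtain ⟨h₀, h₁⟩ := gamma_zero (hNne y hy) hc
      fin_cases i
      · simp only [Fin.mk_zero, Fin.isValue]
        rw [hd₀, h₀, zero_smul]
      · simp only [Fin.mk_one, Fin.isValue]
        rw [hd₁, h₁, zero_smul]
    obtain ⟨x₀, hx₀⟩ := hScon.1
    have hωconst : ∀ y ∈ S, ω y = ω x₀ :=
      fun y hy => const_of_fderiv_zero hS hScon.isPreconnected hωdiff
        (fun z hz => clm_zero_of_pdv (hωzero z hz 0) (hωzero z hz 1)) hy hx₀
    refine ⟨τ x₀ - ω x₀ ⨯₃ u x₀, ω x₀, ?_⟩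
    intro y hy
    have hφdiff : ∀ z ∈ S, DifferentiableAt ℝ (fun w => τ w - ω x₀ ⨯₃ u w) z := by
      intro z hz
      exact ((hτx z hz).differentiableAt (by simp)).sub
        ((LinearMap.toContinuousLinearMap (crossProduct (ω x₀))).differentiableAt.comp z
          ((hux z hz).differentiableAt (by simp)))
    have hφz : ∀ z ∈ S, fderiv ℝ (fun w => τ w - ω x₀ ⨯₃ u w) z = 0 := by
      intro z hz
      have key : ∀ i : Fin 2, pdv i (fun w => τ w - ω x₀ ⨯₃ u w) z = 0 := by
        intro i
        have hgd : DifferentiableAt ℝ (fun w => ω x₀ ⨯₃ u w) z :=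
          (LinearMap.toContinuousLinearMap (crossProduct (ω x₀))).differentiableAt.comp z
            ((hux z hz).differentiableAt (by simp))
        have hsub : pdv i (fun w => τ w - ω x₀ ⨯₃ u w) z
            = pdv i τ z - pdv i (fun w => ω x₀ ⨯₃ u w) z := by
          rw [pdv, fderiv_fun_sub ((hτx z hz).differentiableAt (by simp)) hgd]
          rfl
        rw [hsub, pdv_cross_const ((hux z hz).differentiableAt (by simp)),
          ← hωcross z hz i, hωconst z hz, sub_self]
      exact clm_zero_of_pdv (key 0) (key 1)
    have hconst := const_of_fderiv_zero hS hScon.isPreconnected hφdiff hφz hy hx₀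
    exact sub_eq_iff_eq_add.mp hconst
  · -- vanishing linearised sff from trivial bending
    rintro ⟨c₀, c₁, hc⟩ y hy i j
    have h1 : ∀ z ∈ S, ∀ k : Fin 2, pdv k τ z = c₁ ⨯₃ pdv k u z := by
      intro z hz k
      have heq : τ =ᶠ[nhds z] fun w => c₀ + c₁ ⨯₃ u w := by
        filter_upwards [hS.mem_nhds hz] with w hw using hc w hw
      rw [pdv_congr heq, pdv_const_add_cross ((hux z hz).differentiableAt (by simp))]
    have h2 : pdv i (pdv j τ) y = c₁ ⨯₃ pdv i (pdv j u) y := by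
      have heq : pdv j τ =ᶠ[nhds y] fun w => c₁ ⨯₃ pdv j u w := by
        filter_upwards [hS.mem_nhds hy] with w hw using h1 w hw j
      rw [pdv_congr heq, pdv_cross_const (diffAt_pdv (hux y hy) j)]
    rw [h2]
    have hsum : (∑ k, Gam u y k i j • pdv k τ y)
        = c₁ ⨯₃ (∑ k, Gam u y k i j • pdv k u y) := by
      have e1 : ∀ k : Fin 2, Gam u y k i j • pdv k τ y
          = c₁ ⨯₃ (Gam u y k i j • pdv k u y) := by
        intro k
        rw [h1 y hy k, cross_smul_right]
      calc (∑ k, Gam u y k i j • pdv k τ y)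
          = ∑ k, c₁ ⨯₃ (Gam u y k i j • pdv k u y) := Finset.sum_congr rfl fun k _ => e1 k
        _ = c₁ ⨯₃ (∑ k, Gam u y k i j • pdv k u y) :=
            (map_sum (crossProduct c₁) _ Finset.univ).symm
    rw [hsum, ← map_sub]
    exact nrm_dot_cross (hNne y hy) (hGperp y hy i j 0) (hGperp y hy i j 1) c₁
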